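/- Let G be a graph of the tetrahedral model with no proper face of length 2, containing two bubbles connected by two color-0 edges in the configuration forced by the absence of proper length-2 faces, with the remaining four vertices connected to other bubbles by distinct color-0 edges not forming 2-edge-cuts. Then there is a sequence of two flips producing a connected graph G'' with F(G'') > F(G) and b(G'') = b(G); hence G does not maximize the number of faces. -/

import Mathlib

/-!  A combinatorial model of the Feynman graphs of the rank-3 tetrahedral
(`O(N)^3`) tensor model.

A graph consists of a finite set `B` of bubbles (copies of the tetrahedron
`K_4`); each bubble has four vertices, so the vertex set is `B × Fin 4`.
Inside every bubble the edges of colors `1,2,3` are given once and for all by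
the three fixed-point-free involutions of `Fin 4` (the proper 3-edge-coloring
of `K_4`).  The color-0 propagator edges, one per vertex, are encoded by a
fixed-point-free involution `pairing` of the vertex set. -/

open Equiv

/-- The color-`c` (for `c ∈ {1,2,3}`, here `c : Fin 3`) perfect matching on the
four vertices of a tetrahedral bubble. -/
def bubblePerm : Fin 3 → Equiv.Perm (Fin 4) :=
  ![Equiv.swap 0 1 * Equiv.swap 2 3,
    Equiv.swap 0 2 * Equiv.swap 1 3,
    Equiv.swap 0 3 * Equiv.swap 1 2]

/-- A Feynman graph of the tetrahedral tensor model: a finite set of `K_4`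
bubbles together with a fixed-point-free involution of the vertex set
describing the color-0 edges. -/
structure TGraph where
  B : Type
  [fintypeB : Fintype B]
  [decB : DecidableEq B]
  pairing : Equiv.Perm (B × Fin 4)
  invol : ∀ v, pairing (pairing v) = v
  fixfree : ∀ v, pairing v ≠ v

attribute [instance] TGraph.fintypeB TGraph.decB

namespace TGraph

/-- The vertex set of a graph. -/
abbrev V (G : TGraph) : Type := G.B × Fin 4

/-- The permutation of the vertices given by the color-`c` edges inside the
bubbles. -/
def colPerm (G : TGraph) (c : Fin 3) : Equiv.Perm G.V :=
  (Equiv.refl G.B).prodCongr (bubblePerm c)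

/-- The number of bubbles of a graph. -/
def b (G : TGraph) : ℕ := Fintype.card G.B

/-- The subgroup of permutations of the vertices generated by the color-0
pairing and the color-`c` matching: its orbits are exactly the faces of
color `c` (cycles alternating colors `0` and `c`). -/
def faceGroup (G : TGraph) (c : Fin 3) : Subgroup (Equiv.Perm G.V) :=
  Subgroup.closure {G.pairing, G.colPerm c}

/-- Two vertices lie on the same face of color `c`. -/
def sameFace (G : TGraph) (c : Fin 3) (u v : G.V) : Prop :=
  u ∈ MulAction.orbit (G.faceGroup c) v

/-- The number of faces of color `c` of the graph. -/
noncomputable def numFaces (G : TGraph) (c : Fin 3) : ℕ :=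
  Nat.card (MulAction.orbitRel.Quotient (G.faceGroup c) G.V)

/-- The total number of faces of the graph. -/
noncomputable def F (G : TGraph) : ℕ := ∑ c : Fin 3, G.numFaces c

/-- The length of the face of color `c` through the vertex `v` (a face of
length `n` consists of `n` color-0 edges and `n` color-`c` edges, hence `2n`
vertices). -/
noncomputable def faceLength (G : TGraph) (c : Fin 3) (v : G.V) : ℕ :=
  Nat.card (MulAction.orbit (G.faceGroup c) v) / 2

/-- The subgroup generated by all edges of the graph. -/
def fullGroup (G : TGraph) : Subgroup (Equiv.Perm G.V) :=
  Subgroup.closure ({G.pairing} ∪ Set.range G.colPerm)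

/-- A graph is connected if any vertex can be reached from any other one along
its edges. -/
def Connected (G : TGraph) : Prop :=
  ∀ u v : G.V, u ∈ MulAction.orbit G.fullGroup v

/-- One step along an edge of the graph avoiding the color-0 edges whose
endpoints belong to `S`. -/
def stepAvoiding (G : TGraph) (S : Set G.V) (u v : G.V) : Prop :=
  (∃ c, v = G.colPerm c u) ∨ (v = G.pairing u ∧ u ∉ S ∧ v ∉ S)

/-- Reachability in the graph with the color-0 edges meeting `S` removed. -/
def reachAvoiding (G : TGraph) (S : Set G.V) : G.V → G.V → Prop :=
  Relation.ReflTransGen (G.stepAvoiding S)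

/-- The pair of color-0 edges through the vertices `u` and `w` disconnects the
graph when removed.  Together with the requirement that the two edges be
distinct, this is the notion of a 2-edge-cut of color-0 edges. -/
def CutDisconnects (G : TGraph) (u w : G.V) : Prop :=
  ¬ ∀ x y : G.V, G.reachAvoiding {u, G.pairing u, w, G.pairing w} x y

/-- Two vertices are connected by a 2-point function if they are joined by a
color-0 edge, or if their two (distinct) color-0 edges form a 2-edge-cut. -/
def TwoPoint (G : TGraph) (x y : G.V) : Prop :=
  G.pairing x = y ∨ (y ≠ x ∧ y ≠ G.pairing x ∧ G.CutDisconnects x y)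

/-- The flip of the two color-0 edges `{u, pairing u}` and `{w, pairing w}`
(assumed distinct) which reconnects `u` with `w` (and `pairing u` with
`pairing w`): the pairing is conjugated by the transposition exchanging
`pairing u` and `w`.  The other flip of this pair of edges is
`G.flip u (G.pairing w)`. -/
def flip (G : TGraph) (u w : G.V) : TGraph where
  B := G.B
  pairing := Equiv.swap (G.pairing u) w * G.pairing * Equiv.swap (G.pairing u) w
  invol := by
    intro v
    simp only [Equiv.Perm.mul_apply, Equiv.swap_apply_self, G.invol]
  fixfree := by
    intro v h
    simp only [Equiv.Perm.mul_apply] at h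
    have h' : G.pairing (Equiv.swap (G.pairing u) w v) = Equiv.swap (G.pairing u) w v := by
      have := congrArg (Equiv.swap (G.pairing u) w) h
      simpa using this
    exact G.fixfree _ h'

/-- The face of color `c` through the color-0 edge `{v, pairing v}` has
length 2 (it consists of this edge, a color-`c` edge, a second color-0 edge
and a second color-`c` edge closing the cycle). -/
def FaceLen2 (G : TGraph) (c : Fin 3) (v : G.V) : Prop :=
  G.pairing v ≠ G.colPerm c v ∧
    G.pairing (G.colPerm c (G.pairing v)) = G.colPerm c v

/-- A proper face of length 2 of color `c` through `v`: a face of length 2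
whose two color-0 edges connect two distinct bubbles. -/
def ProperFace2 (G : TGraph) (c : Fin 3) (v : G.V) : Prop :=
  G.FaceLen2 c v ∧ (G.pairing v).1 ≠ v.1

/-- A graph maximizes the number of faces if it is connected and no connected
graph with the same number of bubbles has more faces. -/
def MaximizesFaces (G : TGraph) : Prop :=
  G.Connected ∧ ∀ H : TGraph, H.Connected → H.b = G.b → H.F ≤ G.F

/-- Isomorphisms of graphs: bijections of the vertex sets commuting with the
color-0 pairing and with the colored matchings inside the bubbles. -/
structure Iso (G H : TGraph) where
  toEquiv : G.V ≃ H.V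
  map_pairing : ∀ v, toEquiv (G.pairing v) = H.pairing (toEquiv v)
  map_col : ∀ c v, toEquiv (G.colPerm c v) = H.colPerm c (toEquiv v)

/-- Two graphs are isomorphic. -/
def IsIso (G H : TGraph) : Prop := Nonempty (Iso G H)

end TGraph

open TGraph

/-- The leading-order two-bubble graph `G_2`: two tetrahedral bubbles with
corresponding vertices joined by four color-0 edges, so that all six faces
have length 2. -/
def G2 : TGraph where
  B := Fin 2
  pairing := (Equiv.swap (0 : Fin 2) 1).prodCongr (Equiv.refl (Fin 4))
  invol := by
    rintro ⟨i, k⟩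
    simp [Equiv.prodCongr_apply, Equiv.swap_apply_self]
  fixfree := by
    rintro ⟨i, k⟩ h
    have hi : Equiv.swap (0 : Fin 2) 1 i = i := congrArg Prod.fst h
    fin_cases i <;> simp_all

/-- The double tadpole `G_1^{(c)}`: one tetrahedral bubble whose two color-0
edges each join two vertices already adjacent by an edge of color `c`. -/
def G1 (c : Fin 3) : TGraph where
  B := Fin 1
  pairing := (Equiv.refl (Fin 1)).prodCongr (bubblePerm c)
  invol := by
    rintro ⟨i, k⟩
    have hk : ∀ j : Fin 4, bubblePerm c (bubblePerm c j) = j := by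
      fin_cases c <;> decide
    simp [Equiv.prodCongr_apply, hk]
  fixfree := by
    rintro ⟨i, k⟩ h
    have hk : bubblePerm c k = k := congrArg Prod.snd h
    have hne : ∀ j : Fin 4, bubblePerm c j ≠ j := by
      fin_cases c <;> decide
    exact hne k hk

namespace TGraph

variable (H K : TGraph)

/-- The image of a vertex of `H` in the glued graph. -/
def inlV (x : H.V) : (H.B ⊕ K.B) × Fin 4 := (Sum.inl x.1, x.2)

/-- The image of a vertex of `K` in the glued graph. -/
def inrV (y : K.V) : (H.B ⊕ K.B) × Fin 4 := (Sum.inr y.1, y.2)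

/-- The underlying function of the pairing of the graph obtained by gluing `H`
and `K` along the color-0 edges `{p, H.pairing p}` and `{q, K.pairing q}`:
these two edges are cut and the half-edges are reglued as `p — q` and
`H.pairing p — K.pairing q`.  The new pair of edges is a 2-edge-cut of the
resulting graph when `H` and `K` are connected. -/
def glueFun (p : H.V) (q : K.V) : (H.B ⊕ K.B) × Fin 4 → (H.B ⊕ K.B) × Fin 4 :=
  fun z =>
    match z with
    | (Sum.inl u, k) =>
        if (u, k) = p then inrV H K q
        else if (u, k) = H.pairing p then inrV H K (K.pairing q)
        else inlV H K (H.pairing (u, k))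
    | (Sum.inr u, k) =>
        if (u, k) = q then inlV H K p
        else if (u, k) = K.pairing q then inlV H K (H.pairing p)
        else inrV H K (K.pairing (u, k))

theorem glueFun_inlV (p : H.V) (q : K.V) (x : H.V) :
    glueFun H K p q (inlV H K x) =
      if x = p then inrV H K q
      else if x = H.pairing p then inrV H K (K.pairing q)
      else inlV H K (H.pairing x) := by
  cases x
  rfl

theorem glueFun_inrV (p : H.V) (q : K.V) (y : K.V) :
    glueFun H K p q (inrV H K y) =
      if y = q then inlV H K p
      else if y = K.pairing q then inlV H K (H.pairing p)
      else inrV H K (K.pairing y) := by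
  cases y
  rfl

theorem inlV_injective : Function.Injective (inlV H K) := by
  rintro ⟨u, k⟩ ⟨u', k'⟩ h
  have h1 : (Sum.inl u : H.B ⊕ K.B) = Sum.inl u' := congrArg Prod.fst h
  have h2 : k = k' := congrArg Prod.snd h
  exact Prod.ext (Sum.inl_injective h1) h2

theorem inrV_injective : Function.Injective (inrV H K) := by
  rintro ⟨u, k⟩ ⟨u', k'⟩ h
  have h1 : (Sum.inr u : H.B ⊕ K.B) = Sum.inr u' := congrArg Prod.fst h
  have h2 : k = k' := congrArg Prod.snd h
  exact Prod.ext (Sum.inr_injective h1) h2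

theorem inlV_ne_inrV (x : H.V) (y : K.V) : inlV H K x ≠ inrV H K y := by
  intro h
  exact Sum.inl_ne_inr (congrArg Prod.fst h)

theorem glueFun_invol_inl (p : H.V) (q : K.V) (x : H.V) :
    glueFun H K p q (glueFun H K p q (inlV H K x)) = inlV H K x := by
  rw [glueFun_inlV]
  by_cases h1 : x = p
  · rw [if_pos h1, glueFun_inrV, if_pos rfl, h1]
  · by_cases h2 : x = H.pairing p
    · rw [if_neg h1, if_pos h2, glueFun_inrV,
        if_neg (fun h => K.fixfree q h), if_pos rfl, h2]
    · have hne1 : H.pairing x ≠ p := by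
        intro h; apply h2
        have := congrArg H.pairing h
        rw [H.invol] at this; exact this
      have hne2 : H.pairing x ≠ H.pairing p := fun h => h1 (H.pairing.injective h)
      rw [if_neg h1, if_neg h2, glueFun_inlV, if_neg hne1, if_neg hne2, H.invol]

theorem glueFun_invol_inr (p : H.V) (q : K.V) (y : K.V) :
    glueFun H K p q (glueFun H K p q (inrV H K y)) = inrV H K y := by
  rw [glueFun_inrV]
  by_cases h1 : y = q
  · rw [if_pos h1, glueFun_inlV, if_pos rfl, h1]
  · by_cases h2 : y = K.pairing q
    · rw [if_neg h1, if_pos h2, glueFun_inlV,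
        if_neg (fun h => H.fixfree p h), if_pos rfl, h2]
    · have hne1 : K.pairing y ≠ q := by
        intro h; apply h2
        have := congrArg K.pairing h
        rw [K.invol] at this; exact this
      have hne2 : K.pairing y ≠ K.pairing q := fun h => h1 (K.pairing.injective h)
      rw [if_neg h1, if_neg h2, glueFun_inrV, if_neg hne1, if_neg hne2, K.invol]

theorem glueFun_involutive (p : H.V) (q : K.V) :
    Function.Involutive (glueFun H K p q) := by
  rintro ⟨(u | u), k⟩
  · exact glueFun_invol_inl H K p q (u, k)
  · exact glueFun_invol_inr H K p q (u, k)

theorem glueFun_fixfree (p : H.V) (q : K.V) :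
    ∀ z, glueFun H K p q z ≠ z := by
  have hl : ∀ x : H.V, glueFun H K p q (inlV H K x) ≠ inlV H K x := by
    intro x h
    rw [glueFun_inlV] at h
    by_cases h1 : x = p
    · rw [if_pos h1] at h
      exact inlV_ne_inrV H K x q h.symm
    · by_cases h2 : x = H.pairing p
      · rw [if_neg h1, if_pos h2] at h
        exact inlV_ne_inrV H K x (K.pairing q) h.symm
      · rw [if_neg h1, if_neg h2] at h
        exact H.fixfree x (inlV_injective H K h)
  have hr : ∀ y : K.V, glueFun H K p q (inrV H K y) ≠ inrV H K y := by
    intro y h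
    rw [glueFun_inrV] at h
    by_cases h1 : y = q
    · rw [if_pos h1] at h
      exact inlV_ne_inrV H K p y h
    · by_cases h2 : y = K.pairing q
      · rw [if_neg h1, if_pos h2] at h
        exact inlV_ne_inrV H K (H.pairing p) y h
      · rw [if_neg h1, if_neg h2] at h
        exact K.fixfree y (inrV_injective H K h)
  rintro ⟨(u | u), k⟩
  · exact hl (u, k)
  · exact hr (u, k)

/-- Gluing two graphs along a pair of color-0 edges.  When `H` and `K` are
connected, the two new color-0 edges form a 2-edge-cut of the glued graph, and
conversely every connected graph with a color-0 2-edge-cut arises this way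
from the two closed graphs obtained by cutting the two edges and closing each
side. -/
def glue (p : H.V) (q : K.V) : TGraph where
  B := H.B ⊕ K.B
  pairing := (glueFun_involutive H K p q).toPerm
  invol := fun v => glueFun_involutive H K p q v
  fixfree := fun v => glueFun_fixfree H K p q v

/-- Insertion of a melonic dipole (the 2-point graph obtained by cutting one
color-0 edge of `G_2`) on the color-0 edge `{v, G.pairing v}` of `G`. -/
def insertDipole (G : TGraph) (v : G.V) : TGraph :=
  glue G G2 v ((0 : Fin 2), (0 : Fin 4))

end TGraph

open TGraph

/-- Melonic graphs (up to isomorphism): `G_2` is melonic, and inserting a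
melonic dipole on any color-0 edge of a melonic graph yields a melonic
graph. -/
inductive IsMelonic : TGraph → Prop
  | base {G : TGraph} (h : IsIso G G2) : IsMelonic G
  | insert {G : TGraph} (hG : IsMelonic G) (v : G.V) {H : TGraph}
      (h : IsIso H (G.insertDipole v)) : IsMelonic H

/-- Double tadpoles decorated with melonic 2-point functions (up to
isomorphism): these are exactly the graphs obtained from one of the double
tadpoles `G_1^{(c)}` by repeatedly inserting melonic dipoles on color-0 edges,
i.e. double tadpoles whose two color-0 edges are replaced by melonic 2-point
functions. -/
inductive IsDecoratedTadpole : TGraph → Prop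
  | base {G : TGraph} (c : Fin 3) (h : IsIso G (G1 c)) : IsDecoratedTadpole G
  | insert {G : TGraph} (hG : IsDecoratedTadpole G) (v : G.V) {H : TGraph}
      (h : IsIso H (G.insertDipole v)) : IsDecoratedTadpole H

/-! Let `u` be the `c₁`-neighbour of `v`, so that `{v, pairing v}` and `{u, pairing u}` are the
two color-0 edges between the bubbles of `v` and `pairing v`. Flipping them into the two tadpoles
`{v, u}` and `{pairing v, pairing u}` closes a face of length one of color `c₁` at `{v, u}` and one
of color `c₂` at `{pairing v, pairing u}`, each cut off from an old face, while a flip merges at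
most two faces of any color into one: colors `c₁` and `c₂` gain a face each and the third color
loses at most one. The flipped graph stays connected because the two edges are no 2-edge-cut, and
the flip is the composite of two flips through the crossed pairing `{v, pairing u}`,
`{pairing v, u}`. -/

open MulAction Relation Function

section Quotients

variable {α : Type*}

theorem Setoid.rel_swap_apply [DecidableEq α] (s : Setoid α) {a b : α} (h : s a b) (x : α) :
    s x (swap a b x) := by
  rcases eq_or_ne x a with rfl | hxa
  · simp [h]
  rcases eq_or_ne x b with rfl | hxb
  · simpa using s.symm h
  · rw [swap_apply_of_ne_of_ne hxa hxb]

theorem MulAction.orbitRel_closure_eq_eqvGen (S : Set (Perm α)) :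
    orbitRel (Subgroup.closure S) α = EqvGen.setoid fun x y => ∃ g ∈ S, g x = y := by
  refine le_antisymm ?_ (Setoid.eqvGen_le ?_)
  · have key : ∀ g ∈ Subgroup.closure S, ∀ z,
        EqvGen (fun x y => ∃ g ∈ S, g x = y) z (g z) := fun g hg => by
      induction hg using Subgroup.closure_induction with
      | mem g hg => exact fun z => .rel _ _ ⟨g, hg, rfl⟩
      | one => exact fun z => .refl z
      | mul g h _ _ ihg ihh => exact fun z => (ihh z).trans _ _ _ (ihg (h z))
      | inv g _ ih => exact fun z => by simpa using (ih (g⁻¹ z)).symm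
    rintro x y ⟨⟨g, hg⟩, rfl⟩
    exact (key g hg y).symm
  · rintro x _ ⟨g, hg, rfl⟩
    exact ⟨⟨g⁻¹, inv_mem (Subgroup.subset_closure hg)⟩, by simp [Subgroup.smul_def]⟩

variable [Finite α]

theorem Setoid.card_quotient_le_of_le {s t : Setoid α} (h : s ≤ t) :
    Nat.card (Quotient t) ≤ Nat.card (Quotient s) :=
  Nat.card_le_card_of_surjective (Setoid.map_of_le h) (Quotient.map_surjective _ surjective_id)

theorem Setoid.card_quotient_lt_of_lt {s t : Setoid α} (h : s < t) :
    Nat.card (Quotient t) < Nat.card (Quotient s) := by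
  refine (card_quotient_le_of_le h.le).lt_of_ne fun heq => h.not_ge fun x y hxy => ?_
  have hbij := (Quotient.map_surjective (sb := t) h.le surjective_id).bijective_of_nat_card_le
    heq.symm.le
  exact Quotient.exact (hbij.injective (Quotient.sound hxy : (⟦x⟧ : Quotient t) = ⟦y⟧))

theorem Setoid.card_quotient_le_card_glue_add_one (s : Setoid α) (a b : α) :
    Nat.card (Quotient s) ≤
      Nat.card (Quotient (EqvGen.setoid fun x y => s x y ∨ x = a ∧ y = b)) + 1 := by
  classical
  set t := EqvGen.setoid fun x y => s x y ∨ x = a ∧ y = b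
  have hst : s ≤ t := fun x y h => EqvGen.rel _ _ (Or.inl h)
  have glued : ∀ x y, t x y → s x y ∨ ((s x a ∨ s x b) ∧ (s y a ∨ s y b)) := by
    intro x y h
    induction (h : EqvGen _ x y) with
    | rel x y h =>
      rcases h with h | ⟨rfl, rfl⟩
      · exact Or.inl h
      · exact Or.inr ⟨Or.inl (s.refl _), Or.inr (s.refl _)⟩
    | refl x => exact Or.inl (s.refl x)
    | symm x y _ ih => exact ih.imp s.symm And.symm
    | trans x y z _ _ ih₁ ih₂ =>
      rcases ih₁ with h₁ | ⟨hx, hy⟩ <;> rcases ih₂ with h₂ | ⟨hy', hz⟩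
      · exact Or.inl (s.trans h₁ h₂)
      · exact Or.inr ⟨hy'.imp (s.trans h₁) (s.trans h₁), hz⟩
      · exact Or.inr ⟨hx, hy.imp (s.trans (s.symm h₂)) (s.trans (s.symm h₂))⟩
      · exact Or.inr ⟨hx, hz⟩
  let f : Quotient s → Quotient t ⊕ Unit := fun q =>
    if q = ⟦a⟧ then .inr () else .inl (Setoid.map_of_le hst q)
  have hf : Function.Injective f := by
    intro q₁ q₂ hq
    induction q₁ using Quotient.ind with | _ x
    induction q₂ using Quotient.ind with | _ y
    by_cases hx : (⟦x⟧ : Quotient s) = ⟦a⟧ <;> by_cases hy : (⟦y⟧ : Quotient s) = ⟦a⟧ <;>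
      simp only [f, hx, hy, if_true, if_false, reduceCtorEq, Sum.inl.injEq] at hq
    · rw [hx, hy]
    · rcases glued x y (Quotient.exact hq) with h | ⟨hxa | hxb, hya | hyb⟩
      · exact Quotient.sound h
      all_goals first
        | exact absurd (Quotient.sound ‹_›) hx
        | exact absurd (Quotient.sound ‹_›) hy
        | exact Quotient.sound (s.trans hxb (s.symm hyb))
  calc Nat.card (Quotient s) ≤ Nat.card (Quotient t ⊕ Unit) := Nat.card_le_card_of_injective f hf
    _ = Nat.card (Quotient t) + 1 := by simp [Nat.card_sum]

end Quotients

theorem Fin.sum_univ_three_lt_of_two_gains {f g : Fin 3 → ℕ} {i j : Fin 3} (hij : i ≠ j)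
    (hi : f i < g i) (hj : f j < g j) (h : ∀ k, f k ≤ g k + 1) : ∑ k, f k < ∑ k, g k := by
  have h₀ := h 0
  have h₁ := h 1
  have h₂ := h 2
  rw [Fin.sum_univ_three, Fin.sum_univ_three]
  fin_cases i <;> fin_cases j <;> simp at hij hi hj <;> omega

namespace TGraph

variable (G : TGraph)

def faceStep (c : Fin 3) (x y : G.V) : Prop := G.pairing x = y ∨ G.colPerm c x = y

def edgeStep (x y : G.V) : Prop := G.pairing x = y ∨ ∃ c, G.colPerm c x = y

theorem orbitRel_faceGroup (c : Fin 3) :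
    orbitRel (G.faceGroup c) G.V = EqvGen.setoid (G.faceStep c) := by
  rw [faceGroup, orbitRel_closure_eq_eqvGen]
  congr
  ext x y
  simp [faceStep]

theorem numFaces_eq_card (c : Fin 3) :
    G.numFaces c = Nat.card (Quotient (EqvGen.setoid (G.faceStep c))) := by
  rw [numFaces, orbitRel.Quotient, orbitRel_faceGroup]

theorem connected_iff : G.Connected ↔ ∀ u v, EqvGen G.edgeStep u v := by
  have h : orbitRel G.fullGroup G.V = EqvGen.setoid G.edgeStep := by
    rw [fullGroup, orbitRel_closure_eq_eqvGen]
    congr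
    ext x y
    simp [edgeStep, eq_comm]
  simp only [Connected, ← orbitRel_apply]
  rw [h]
  rfl

theorem colPerm_colPerm (c : Fin 3) (x : G.V) : G.colPerm c (G.colPerm c x) = x := by
  obtain ⟨b, k⟩ := x
  simp only [colPerm, prodCongr_apply, refl_apply, Prod.map, Prod.mk.injEq, true_and]
  fin_cases c <;> fin_cases k <;> decide

theorem colPerm_ne (c : Fin 3) (x : G.V) : G.colPerm c x ≠ x := by
  obtain ⟨b, k⟩ := x
  simp only [colPerm, prodCongr_apply, refl_apply, Prod.map, ne_eq, Prod.mk.injEq, true_and]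
  fin_cases c <;> fin_cases k <;> decide

theorem pairing_eq_iff {x y : G.V} : G.pairing x = y ↔ x = G.pairing y :=
  ⟨fun h => h ▸ (G.invol x).symm, fun h => h ▸ G.invol y⟩

theorem colPerm_eq_iff {c : Fin 3} {x y : G.V} : G.colPerm c x = y ↔ x = G.colPerm c y :=
  ⟨fun h => h ▸ (G.colPerm_colPerm c x).symm, fun h => h ▸ G.colPerm_colPerm c y⟩

variable {u w : G.V}

theorem flip_pairing_apply (x : G.V) :
    (G.flip u w).pairing x = swap (G.pairing u) w (G.pairing (swap (G.pairing u) w x)) := rfl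

theorem flip_pairing_left (h : u ≠ w) : (G.flip u w).pairing u = w := by
  rw [flip_pairing_apply, swap_apply_of_ne_of_ne (G.fixfree u).symm h, swap_apply_left]

theorem flip_pairing_pairing_left (h : u ≠ w) :
    (G.flip u w).pairing (G.pairing u) = G.pairing w := by
  rw [flip_pairing_apply, swap_apply_left, swap_apply_of_ne_of_ne]
  · exact fun e => h (G.pairing.injective e).symm
  · exact G.fixfree w

theorem flip_pairing_of_ne {x : G.V} (hu : x ≠ u) (hpu : x ≠ G.pairing u) (hw : x ≠ w)
    (hpw : x ≠ G.pairing w) : (G.flip u w).pairing x = G.pairing x := by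
  rw [flip_pairing_apply, swap_apply_of_ne_of_ne hpu hw, swap_apply_of_ne_of_ne]
  · rwa [Ne, G.pairing_eq_iff, G.invol]
  · rwa [Ne, G.pairing_eq_iff]

/-- `τ := swap (pairing w) w` commutes with the pairing and conjugates the first flip's
transposition `swap (pairing u) (pairing w)` into the direct flip's `swap (pairing u) w`. -/
theorem flip_flip_pairing (hw : u ≠ w) (hpw : u ≠ G.pairing w) :
    (G.flip u (G.pairing w)).flip u w = G.flip u w := by
  set τ := swap (G.pairing w) w
  have hτp : τ * G.pairing * τ = G.pairing := by
    ext1 x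
    have hi := G.invol
    have hf := G.fixfree
    simp only [τ, Perm.mul_apply, swap_apply_def]
    split_ifs <;> grind
  have hτσ : τ * swap (G.pairing u) (G.pairing w) * τ = swap (G.pairing u) w := by
    rw [swap_mul_swap_mul_swap (fun h => hw (G.pairing.injective h))
      (fun h => hpw (by rw [← h, G.invol])), swap_comm]
  have key : ((G.flip u (G.pairing w)).flip u w).pairing = (G.flip u w).pairing := by
    change swap ((G.flip u (G.pairing w)).pairing u) w * (G.flip u (G.pairing w)).pairing *
      swap ((G.flip u (G.pairing w)).pairing u) w = _
    rw [flip_pairing_left G hpw]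
    calc τ * (swap (G.pairing u) (G.pairing w) * G.pairing * swap (G.pairing u) (G.pairing w)) * τ
        = (τ * swap (G.pairing u) (G.pairing w) * τ) * (τ * G.pairing * τ) *
          (τ * swap (G.pairing u) (G.pairing w) * τ) := by
          simp only [τ, mul_assoc, swap_mul_self_mul]
      _ = swap (G.pairing u) w * G.pairing * swap (G.pairing u) w := by rw [hτσ, hτp]
  unfold flip
  congr 1

theorem flip_faceStep_le {c : Fin 3} {s : Setoid G.V} (hG : ∀ x y, G.faceStep c x y → s x y)
    (huw : s u w) (x y : G.V) (h : (G.flip u w).faceStep c x y) : s x y := by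
  have hσ := s.rel_swap_apply (s.trans (s.symm (hG u _ (Or.inl rfl))) huw)
  rcases h with rfl | rfl
  · exact s.trans (hσ x) (s.trans (hG _ _ (Or.inl rfl)) (hσ _))
  · exact hG x _ (Or.inr rfl)

theorem numFaces_le_numFaces_flip_add_one (c : Fin 3) (u w : G.V) :
    G.numFaces c ≤ (G.flip u w).numFaces c + 1 := by
  set s := EqvGen.setoid (G.faceStep c)
  set t := EqvGen.setoid fun x y => s x y ∨ x = u ∧ y = w
  have hflip : EqvGen.setoid ((G.flip u w).faceStep c) ≤ t :=
    Setoid.eqvGen_le <| G.flip_faceStep_le (fun x y h => EqvGen.rel _ _ (Or.inl (.rel _ _ h)))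
      (EqvGen.rel _ _ (Or.inr ⟨rfl, rfl⟩))
  rw [numFaces_eq_card, numFaces_eq_card]
  exact (s.card_quotient_le_card_glue_add_one u w).trans
    (Nat.add_le_add_right (Setoid.card_quotient_le_of_le hflip) 1)

theorem numFaces_lt_numFaces_flip {c : Fin 3} (huw : EqvGen (G.faceStep c) u w) {a b : G.V}
    (hab : EqvGen (G.faceStep c) a b) (hab' : ¬ EqvGen ((G.flip u w).faceStep c) a b) :
    G.numFaces c < (G.flip u w).numFaces c := by
  rw [numFaces_eq_card, numFaces_eq_card]
  refine Setoid.card_quotient_lt_of_lt ⟨?_, fun h => hab' (h hab)⟩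
  exact Setoid.eqvGen_le (G.flip_faceStep_le (fun x y => EqvGen.rel x y) huw)

theorem eqvGen_faceStep_of_tadpole {c : Fin 3} {a b : G.V} (hp : G.pairing a = b)
    (hc : G.colPerm c a = b) {x : G.V} (h : EqvGen (G.faceStep c) a x) : x = a ∨ x = b := by
  have hker : EqvGen.setoid (G.faceStep c) ≤ Setoid.ker fun y => y = a ∨ y = b := by
    refine Setoid.eqvGen_le fun y z hyz => ?_
    simp only [Setoid.ker_def]
    rcases hyz with rfl | rfl
    · rw [G.pairing_eq_iff, G.pairing_eq_iff, hp, ← G.pairing_eq_iff.mp hp, or_comm]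
    · rw [G.colPerm_eq_iff, G.colPerm_eq_iff, hc, ← G.colPerm_eq_iff.mp hc, or_comm]
  simpa [Setoid.ker_def] using (hker h).symm

theorem connected_flip_of_not_cutDisconnects (h : ¬ G.CutDisconnects u w) :
    (G.flip u w).Connected := by
  refine (connected_iff _).mpr fun (x y : G.V) => ?_
  refine EqvGen.reflTransGen_le_eqvGen _ _ _ (ReflTransGen.mono
    (fun (a b : G.V) (hab : G.stepAvoiding {u, G.pairing u, w, G.pairing w} a b) => ?_) _ _
    (not_not.mp h x y))
  rcases hab with ⟨c, rfl⟩ | ⟨rfl, ha, -⟩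
  · exact Or.inr ⟨c, rfl⟩
  · simp only [Set.mem_insert_iff, Set.mem_singleton_iff, not_or] at ha
    exact Or.inl (G.flip_pairing_of_ne ha.1 ha.2.1 ha.2.2.1 ha.2.2.2)

theorem F_lt_F_flip_of_double_edge {v : G.V} (hbub : (G.pairing v).1 ≠ v.1) {c₁ c₂ : Fin 3}
    (hc : c₁ ≠ c₂) (hsecond : G.pairing (G.colPerm c₁ v) = G.colPerm c₂ (G.pairing v)) :
    G.F < (G.flip v (G.colPerm c₁ v)).F := by
  set u := G.colPerm c₁ v
  have hvu : v ≠ u := (G.colPerm_ne c₁ v).symm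
  refine Fin.sum_univ_three_lt_of_two_gains hc ?_ ?_
    fun c => G.numFaces_le_numFaces_flip_add_one c v u
  · refine G.numFaces_lt_numFaces_flip (.rel _ _ (Or.inr rfl)) (a := v) (b := G.pairing v)
      (.rel _ _ (Or.inl rfl)) fun h => ?_
    rcases (G.flip v u).eqvGen_faceStep_of_tadpole (G.flip_pairing_left hvu) rfl h with h | h
    · exact hbub (congrArg Prod.fst h)
    · exact hbub (by rw [h]; rfl)
  · have huv : EqvGen (G.faceStep c₂) v u :=
      (EqvGen.rel v (G.pairing v) (Or.inl rfl)).trans _ _ _ <|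
        (EqvGen.rel _ (G.pairing u) (Or.inr hsecond.symm)).trans _ _ _
          (EqvGen.rel _ u (Or.inl (G.invol u)))
    refine G.numFaces_lt_numFaces_flip huv (a := G.pairing v) (b := v)
      (.symm _ _ (.rel _ _ (Or.inl rfl))) fun h => ?_
    rcases (G.flip v u).eqvGen_faceStep_of_tadpole (G.flip_pairing_pairing_left hvu)
      hsecond.symm h with h | h
    · exact hbub (congrArg Prod.fst h).symm
    · exact hbub (by rw [G.pairing_eq_iff.mpr h]; rfl)

end TGraph

theorem double_edge_not_maximal_general (G : TGraph)
    (v : G.V) (hbub : (G.pairing v).1 ≠ v.1)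
    (c₁ c₂ : Fin 3) (hc : c₁ ≠ c₂)
    (hsecond : G.pairing (G.colPerm c₁ v) = G.colPerm c₂ (G.pairing v))
    (hnocut : ∀ x y : G.V,
      (x.1 = v.1 ∨ x.1 = (G.pairing v).1) →
      (y.1 = v.1 ∨ y.1 = (G.pairing v).1) →
      y ≠ x → y ≠ G.pairing x → ¬ G.CutDisconnects x y) :
    (∃ a b a' b' : G.V,
      ((G.flip a b).flip a' b').Connected ∧
        G.F < ((G.flip a b).flip a' b').F ∧
        ((G.flip a b).flip a' b').b = G.b) ∧
      ¬ G.MaximizesFaces := by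
  have hvu : v ≠ G.colPerm c₁ v := (G.colPerm_ne c₁ v).symm
  have hvpu : v ≠ G.pairing (G.colPerm c₁ v) := fun h =>
    hbub (by rw [G.pairing_eq_iff.mpr h]; rfl)
  have hconn : (G.flip v (G.colPerm c₁ v)).Connected :=
    G.connected_flip_of_not_cutDisconnects <| hnocut v _ (Or.inl rfl) (Or.inl rfl) hvu.symm
      fun h => hbub (by rw [← h]; rfl)
  have hF := G.F_lt_F_flip_of_double_edge hbub hc hsecond
  refine ⟨⟨v, G.pairing (G.colPerm c₁ v), v, G.colPerm c₁ v, ?_⟩, fun hmax => ?_⟩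
  · rw [G.flip_flip_pairing hvu hvpu]
    exact ⟨hconn, hF, rfl⟩
  · exact (hmax.2 _ hconn rfl).not_gt hF

/-- Let `G` be a connected graph with no proper face of
length 2, containing two distinct bubbles joined by the color-0 edge
`{v, pairing v}` and by a second color-0 edge in the configuration forced by
the absence of proper length-2 faces (joining vertices attached to `v` and to
`pairing v` by edges of two different colors), with the remaining four
vertices of these two bubbles connected to other bubbles by distinct color-0
edges not forming 2-edge-cuts.  Then a sequence of two flips produces a
connected graph `G''` with the same number of bubbles and strictly more
faces; hence `G` does not maximize the number of faces. -/
theorem double_edge_not_maximal (G : TGraph) (hG : G.Connected)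
    (hnpf : ∀ c x, ¬ G.ProperFace2 c x)
    (v : G.V) (hbub : (G.pairing v).1 ≠ v.1)
    (c₁ c₂ : Fin 3) (hc : c₁ ≠ c₂)
    (hsecond : G.pairing (G.colPerm c₁ v) = G.colPerm c₂ (G.pairing v))
    (hrest : ∀ x : G.V,
      (x.1 = v.1 ∨ x.1 = (G.pairing v).1) →
      x ≠ v → x ≠ G.pairing v → x ≠ G.colPerm c₁ v →
      x ≠ G.colPerm c₂ (G.pairing v) →
      (G.pairing x).1 ≠ v.1 ∧ (G.pairing x).1 ≠ (G.pairing v).1)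
    (hnocut : ∀ x y : G.V,
      (x.1 = v.1 ∨ x.1 = (G.pairing v).1) →
      (y.1 = v.1 ∨ y.1 = (G.pairing v).1) →
      y ≠ x → y ≠ G.pairing x → ¬ G.CutDisconnects x y) :
    (∃ a b a' b' : G.V,
      ((G.flip a b).flip a' b').Connected ∧
        G.F < ((G.flip a b).flip a' b').F ∧
        ((G.flip a b).flip a' b').b = G.b) ∧
      ¬ G.MaximizesFaces :=
  double_edge_not_maximal_general G v hbub c₁ c₂ hc hsecond hnocut
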